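/- Let u : Ω → ℝ² be a smooth divergence-free vector field on an open set Ω ⊆ ℝ², and let ω = ∂₁u₂ − ∂₂u₁ be its curl. Then div(u ω) = (∂²_{x₁} − ∂²_{x₂})(u₁ u₂) − ∂²_{x₁ x₂}(u₁² − u₂²). -/

import Mathlib

noncomputable section

/-- partial derivative in the first coordinate direction -/
def pd1 (f : ℝ × ℝ → ℝ) (x : ℝ × ℝ) : ℝ := fderiv ℝ f x (1, 0)

/-- partial derivative in the second coordinate direction -/
def pd2 (f : ℝ × ℝ → ℝ) (x : ℝ × ℝ) : ℝ := fderiv ℝ f x (0, 1)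

lemma fderiv_mul_apply' {f g : ℝ × ℝ → ℝ} {x : ℝ × ℝ}
    (hf : DifferentiableAt ℝ f x) (hg : DifferentiableAt ℝ g x) (v : ℝ × ℝ) :
    fderiv ℝ (fun y => f y * g y) x v = f x * fderiv ℝ g x v + g x * fderiv ℝ f x v := by
  rw [fderiv_fun_mul hf hg]
  simp [mul_comm]

lemma pd_of_fderiv_apply {f : ℝ × ℝ → ℝ} {x : ℝ × ℝ}
    (hf : DifferentiableAt ℝ (fderiv ℝ f) x) (v w : ℝ × ℝ) :
    fderiv ℝ (fun y => fderiv ℝ f y v) x w = fderiv ℝ (fderiv ℝ f) x w v := by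
  rw [fderiv_clm_apply hf (differentiableAt_const v)]
  simp

/-- For a smooth divergence-free vector field `u = (u₁,u₂)` on an open set
`Ω ⊆ ℝ²` with curl `ω = ∂₁u₂ − ∂₂u₁`, one has
`div(uω) = (∂₁² − ∂₂²)(u₁u₂) − ∂₁∂₂(u₁² − u₂²)` on `Ω`. -/
theorem stmt5
    (Ω : Set (ℝ × ℝ)) (hΩ : IsOpen Ω)
    (u₁ u₂ : ℝ × ℝ → ℝ)
    (hu₁ : ContDiffOn ℝ (⊤ : ℕ∞) u₁ Ω) (hu₂ : ContDiffOn ℝ (⊤ : ℕ∞) u₂ Ω)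
    (hdiv : ∀ x ∈ Ω, pd1 u₁ x + pd2 u₂ x = 0) :
    ∀ x ∈ Ω,
      pd1 (fun y => u₁ y * (pd1 u₂ y - pd2 u₁ y)) x
        + pd2 (fun y => u₂ y * (pd1 u₂ y - pd2 u₁ y)) x
      = pd1 (pd1 (fun y => u₁ y * u₂ y)) x
        - pd2 (pd2 (fun y => u₁ y * u₂ y)) x
        - pd1 (pd2 (fun y => u₁ y ^ 2 - u₂ y ^ 2)) x := by
  intro x hx
  have hU : Ω ∈ nhds x := hΩ.mem_nhds hx
  have c1 : ∀ y ∈ Ω, ContDiffAt ℝ (⊤ : ℕ∞) u₁ y := fun y hy => hu₁.contDiffAt (hΩ.mem_nhds hy)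
  have c2 : ∀ y ∈ Ω, ContDiffAt ℝ (⊤ : ℕ∞) u₂ y := fun y hy => hu₂.contDiffAt (hΩ.mem_nhds hy)
  have d1 : ∀ y ∈ Ω, DifferentiableAt ℝ u₁ y := fun y hy => (c1 y hy).differentiableAt (by simp)
  have d2 : ∀ y ∈ Ω, DifferentiableAt ℝ u₂ y := fun y hy => (c2 y hy).differentiableAt (by simp)
  have f1 : ∀ y ∈ Ω, DifferentiableAt ℝ (fderiv ℝ u₁) y := fun y hy =>
    ((c1 y hy).fderiv_right (m := 1) (WithTop.coe_le_coe.mpr le_top)).differentiableAt (by simp)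
  have f2 : ∀ y ∈ Ω, DifferentiableAt ℝ (fderiv ℝ u₂) y := fun y hy =>
    ((c2 y hy).fderiv_right (m := 1) (WithTop.coe_le_coe.mpr le_top)).differentiableAt (by simp)
  have p1 : ∀ (v : ℝ × ℝ), ∀ y ∈ Ω, DifferentiableAt ℝ (fun z => fderiv ℝ u₁ z v) y :=
    fun v y hy => (f1 y hy).clm_apply (differentiableAt_const v)
  have p2 : ∀ (v : ℝ × ℝ), ∀ y ∈ Ω, DifferentiableAt ℝ (fun z => fderiv ℝ u₂ z v) y :=
    fun v y hy => (f2 y hy).clm_apply (differentiableAt_const v)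
  -- symmetry of second derivatives
  have hs1 : fderiv ℝ (fderiv ℝ u₁) x (1,0) (0,1) = fderiv ℝ (fderiv ℝ u₁) x (0,1) (1,0) :=
    ((c1 x hx).isSymmSndFDerivAt (by rw [minSmoothness_of_isRCLikeNormedField]; exact WithTop.coe_le_coe.mpr le_top)) (1,0) (0,1)
  have hs2 : fderiv ℝ (fderiv ℝ u₂) x (1,0) (0,1) = fderiv ℝ (fderiv ℝ u₂) x (0,1) (1,0) :=
    ((c2 x hx).isSymmSndFDerivAt (by rw [minSmoothness_of_isRCLikeNormedField]; exact WithTop.coe_le_coe.mpr le_top)) (1,0) (0,1)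
  -- divergence-free at x
  have hdivx : fderiv ℝ u₁ x (1,0) + fderiv ℝ u₂ x (0,1) = 0 := hdiv x hx
  -- derivatives of the divergence
  have hdloc : (fun y => fderiv ℝ u₁ y (1,0) + fderiv ℝ u₂ y (0,1)) =ᶠ[nhds x]
      (fun _ => (0 : ℝ)) := by
    filter_upwards [hU] with y hy
    exact hdiv y hy
  have hdd : ∀ w : ℝ × ℝ,
      fderiv ℝ (fderiv ℝ u₁) x w (1,0) + fderiv ℝ (fderiv ℝ u₂) x w (0,1) = 0 := by
    intro w
    have h0 : fderiv ℝ (fun y => fderiv ℝ u₁ y (1,0) + fderiv ℝ u₂ y (0,1)) x = 0 := by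
      rw [hdloc.fderiv_eq]; exact fderiv_const_apply 0
    have h1 : fderiv ℝ (fun y => fderiv ℝ u₁ y (1,0) + fderiv ℝ u₂ y (0,1)) x w
        = fderiv ℝ (fderiv ℝ u₁) x w (1,0) + fderiv ℝ (fderiv ℝ u₂) x w (0,1) := by
      rw [fderiv_fun_add (p1 (1,0) x hx) (p2 (0,1) x hx)]
      simp [pd_of_fderiv_apply (f1 x hx), pd_of_fderiv_apply (f2 x hx)]
    rw [h0] at h1
    simpa using h1.symm
  have hd1 := hdd (1,0)
  have hd2 := hdd (0,1)
  -- Term 1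
  have T1 : pd1 (fun y => u₁ y * (pd1 u₂ y - pd2 u₁ y)) x
      = u₁ x * (fderiv ℝ (fderiv ℝ u₂) x (1,0) (1,0) - fderiv ℝ (fderiv ℝ u₁) x (1,0) (0,1))
        + (fderiv ℝ u₂ x (1,0) - fderiv ℝ u₁ x (0,1)) * fderiv ℝ u₁ x (1,0) := by
    show fderiv ℝ (fun y => u₁ y * (fderiv ℝ u₂ y (1,0) - fderiv ℝ u₁ y (0,1))) x (1,0) = _
    rw [fderiv_mul_apply' (d1 x hx) ((p2 (1,0) x hx).fun_sub (p1 (0,1) x hx)),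
      fderiv_fun_sub (p2 (1,0) x hx) (p1 (0,1) x hx)]
    simp [pd_of_fderiv_apply (f1 x hx), pd_of_fderiv_apply (f2 x hx)]
  -- Term 2
  have T2 : pd2 (fun y => u₂ y * (pd1 u₂ y - pd2 u₁ y)) x
      = u₂ x * (fderiv ℝ (fderiv ℝ u₂) x (0,1) (1,0) - fderiv ℝ (fderiv ℝ u₁) x (0,1) (0,1))
        + (fderiv ℝ u₂ x (1,0) - fderiv ℝ u₁ x (0,1)) * fderiv ℝ u₂ x (0,1) := by
    show fderiv ℝ (fun y => u₂ y * (fderiv ℝ u₂ y (1,0) - fderiv ℝ u₁ y (0,1))) x (0,1) = _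
    rw [fderiv_mul_apply' (d2 x hx) ((p2 (1,0) x hx).fun_sub (p1 (0,1) x hx)),
      fderiv_fun_sub (p2 (1,0) x hx) (p1 (0,1) x hx)]
    simp [pd_of_fderiv_apply (f1 x hx), pd_of_fderiv_apply (f2 x hx)]
  -- inner product rule for u₁*u₂, eventual
  have inner12 : ∀ v : ℝ × ℝ, (fun y => fderiv ℝ (fun z => u₁ z * u₂ z) y v) =ᶠ[nhds x]
      (fun y => u₁ y * fderiv ℝ u₂ y v + u₂ y * fderiv ℝ u₁ y v) := by
    intro v
    filter_upwards [hU] with y hy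
    exact fderiv_mul_apply' (d1 y hy) (d2 y hy) v
  -- Term 3
  have T3 : pd1 (pd1 (fun y => u₁ y * u₂ y)) x
      = (u₁ x * fderiv ℝ (fderiv ℝ u₂) x (1,0) (1,0)
          + fderiv ℝ u₂ x (1,0) * fderiv ℝ u₁ x (1,0))
        + (u₂ x * fderiv ℝ (fderiv ℝ u₁) x (1,0) (1,0)
          + fderiv ℝ u₁ x (1,0) * fderiv ℝ u₂ x (1,0)) := by
    show fderiv ℝ (fun y => fderiv ℝ (fun z => u₁ z * u₂ z) y (1,0)) x (1,0) = _
    rw [(inner12 (1,0)).fderiv_eq]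
    rw [fderiv_fun_add ((d1 x hx).fun_mul (p2 (1,0) x hx)) ((d2 x hx).fun_mul (p1 (1,0) x hx))]
    simp only [ContinuousLinearMap.add_apply]
    rw [fderiv_mul_apply' (d1 x hx) (p2 (1,0) x hx),
      fderiv_mul_apply' (d2 x hx) (p1 (1,0) x hx),
      pd_of_fderiv_apply (f1 x hx), pd_of_fderiv_apply (f2 x hx)]
  -- Term 4
  have T4 : pd2 (pd2 (fun y => u₁ y * u₂ y)) x
      = (u₁ x * fderiv ℝ (fderiv ℝ u₂) x (0,1) (0,1)
          + fderiv ℝ u₂ x (0,1) * fderiv ℝ u₁ x (0,1))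
        + (u₂ x * fderiv ℝ (fderiv ℝ u₁) x (0,1) (0,1)
          + fderiv ℝ u₁ x (0,1) * fderiv ℝ u₂ x (0,1)) := by
    show fderiv ℝ (fun y => fderiv ℝ (fun z => u₁ z * u₂ z) y (0,1)) x (0,1) = _
    rw [(inner12 (0,1)).fderiv_eq]
    rw [fderiv_fun_add ((d1 x hx).fun_mul (p2 (0,1) x hx)) ((d2 x hx).fun_mul (p1 (0,1) x hx))]
    simp only [ContinuousLinearMap.add_apply]
    rw [fderiv_mul_apply' (d1 x hx) (p2 (0,1) x hx),
      fderiv_mul_apply' (d2 x hx) (p1 (0,1) x hx),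
      pd_of_fderiv_apply (f1 x hx), pd_of_fderiv_apply (f2 x hx)]
  -- inner derivative of u₁² - u₂², eventual
  have innerSq : (fun y => fderiv ℝ (fun z => u₁ z ^ 2 - u₂ z ^ 2) y (0,1)) =ᶠ[nhds x]
      (fun y => (u₁ y * fderiv ℝ u₁ y (0,1) + u₁ y * fderiv ℝ u₁ y (0,1))
        - (u₂ y * fderiv ℝ u₂ y (0,1) + u₂ y * fderiv ℝ u₂ y (0,1))) := by
    filter_upwards [hU] with y hy
    have hfun : (fun z => u₁ z ^ 2 - u₂ z ^ 2) = fun z => u₁ z * u₁ z - u₂ z * u₂ z := by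
      funext z; ring
    rw [hfun, fderiv_fun_sub ((d1 y hy).fun_mul (d1 y hy)) ((d2 y hy).fun_mul (d2 y hy))]
    simp only [ContinuousLinearMap.sub_apply]
    rw [fderiv_mul_apply' (d1 y hy) (d1 y hy), fderiv_mul_apply' (d2 y hy) (d2 y hy)]
  -- Term 5
  have T5 : pd1 (pd2 (fun y => u₁ y ^ 2 - u₂ y ^ 2)) x
      = 2 * (u₁ x * fderiv ℝ (fderiv ℝ u₁) x (1,0) (0,1)
          + fderiv ℝ u₁ x (0,1) * fderiv ℝ u₁ x (1,0))
        - 2 * (u₂ x * fderiv ℝ (fderiv ℝ u₂) x (1,0) (0,1)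
          + fderiv ℝ u₂ x (0,1) * fderiv ℝ u₂ x (1,0)) := by
    show fderiv ℝ (fun y => fderiv ℝ (fun z => u₁ z ^ 2 - u₂ z ^ 2) y (0,1)) x (1,0) = _
    rw [innerSq.fderiv_eq]
    have hA : DifferentiableAt ℝ (fun y => u₁ y * fderiv ℝ u₁ y (0,1)) x :=
      (d1 x hx).fun_mul (p1 (0,1) x hx)
    have hB : DifferentiableAt ℝ (fun y => u₂ y * fderiv ℝ u₂ y (0,1)) x :=
      (d2 x hx).fun_mul (p2 (0,1) x hx)
    rw [fderiv_fun_sub (hA.fun_add hA) (hB.fun_add hB), ContinuousLinearMap.sub_apply,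
      fderiv_fun_add hA hA, fderiv_fun_add hB hB]
    simp only [ContinuousLinearMap.add_apply]
    rw [fderiv_mul_apply' (d1 x hx) (p1 (0,1) x hx),
      fderiv_mul_apply' (d2 x hx) (p2 (0,1) x hx),
      pd_of_fderiv_apply (f1 x hx), pd_of_fderiv_apply (f2 x hx)]
    ring
  rw [T1, T2, T3, T4, T5]
  linear_combination (fderiv ℝ u₁ x (0,1) - fderiv ℝ u₂ x (1,0)) * hdivx
    + u₁ x * hd2 - u₂ x * hd1 + u₁ x * hs1 - u₂ x * hs2
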